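/- Let Φ : M_D(ℂ) → M_d(ℂ) be a linear map that is a contraction in the sense ‖Φ(X)‖ ≤ ‖X‖ (e.g., the normalized partial trace X ↦ (1/d^{|complement|}) Tr_{T̄}(X) in operator norm). If ‖L‖ ≤ ε < 1 (so exp(L) = I + L + R with ‖R‖ ≤ e^ε − 1 − ε and ‖L + R‖ ≤ e^ε − 1 < 1 when ε < ln 2), then ‖log(Φ(exp L)) − Φ(L)‖ ≤ ln(exp(1−e^ε)/(2−e^ε)) + e^ε − 1 − ε, where log is the power-series matrix logarithm around the identity and Φ(I_D) = I_d. -/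

import Mathlib

open scoped Matrix

attribute [local instance] Matrix.linftyOpNormedAddCommGroup Matrix.linftyOpNormedRing
  Matrix.linftyOpNormedAlgebra

/-- The matrix logarithm `log (I + A)` defined by the power series
`∑_{n ≥ 1} (−1)^{n+1} A^n / n`. -/
noncomputable def matLogOnePlus {n : ℕ} (A : Matrix (Fin n) (Fin n) ℂ) :
    Matrix (Fin n) (Fin n) ℂ :=
  ∑' k : ℕ, (((-1 : ℂ) ^ (k + 2) / (k + 1)) • A ^ (k + 1))

/-!
Write `exp L = 1 + L + R`. Comparing the exponential series with that of `exp ‖L‖` term by term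
from the quadratic term on gives `‖R‖ ≤ e^ε - 1 - ε`, so by contractivity
`A := Φ (exp L) - 1 = Φ L + Φ R` has `‖A‖ ≤ e^ε - 1 < 1`. Comparing the logarithm series with that
of `-log (1 - ‖A‖)` from the quadratic term on bounds `‖log (1 + A) - A‖`, and
`log (1 + A) - Φ L = (log (1 + A) - A) + Φ R`.
-/

open Finset
open scoped Nat

theorem norm_sub_sum_range_le_of_hasSum {E : Type*} [SeminormedAddCommGroup E]
    {f : ℕ → E} {g : ℕ → ℝ} {a : E} {b : ℝ} (hf : HasSum f a) (hg : HasSum g b) (k : ℕ)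
    (h : ∀ n, ‖f (n + k)‖ ≤ g (n + k)) :
    ‖a - ∑ i ∈ range k, f i‖ ≤ b - ∑ i ∈ range k, g i :=
  ((hasSum_nat_add_iff' k).mpr hf).norm_le_of_bounded ((hasSum_nat_add_iff' k).mpr hg) h

-- `NormedSpace.exp` does not depend on `𝕂`; it only supplies the scalars of the series.
theorem norm_exp_sub_one_sub_le (𝕂 : Type*) {𝔸 : Type*} [RCLike 𝕂] [NormedRing 𝔸]
    [NormedAlgebra 𝕂 𝔸] [CompleteSpace 𝔸] {x : 𝔸} {r : ℝ} (hx : ‖x‖ ≤ r) :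
    ‖NormedSpace.exp x - 1 - x‖ ≤ Real.exp r - 1 - r := by
  have hr : HasSum (fun n : ℕ => r ^ n / n !) (Real.exp r) := by
    rw [Real.exp_eq_exp_ℝ]
    exact NormedSpace.expSeries_div_hasSum_exp r
  have key := norm_sub_sum_range_le_of_hasSum (NormedSpace.exp_series_hasSum_exp' (𝕂 := 𝕂) x)
    hr 2 fun n => ?_
  · simpa [sum_range_succ, sub_sub] using key
  rw [norm_smul, norm_inv, RCLike.norm_natCast, inv_mul_eq_div]
  gcongr
  exact (norm_pow_le' x (by omega)).trans (pow_le_pow_left₀ (norm_nonneg x) hx _)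

section NormedAlgebra

variable {𝕂 𝔸 : Type*} [RCLike 𝕂] [NormedRing 𝔸] [NormedAlgebra 𝕂 𝔸]

theorem norm_logSeries_term_le {x : 𝔸} {r : ℝ} (hx : ‖x‖ ≤ r) (k : ℕ) :
    ‖((-1 : 𝕂) ^ (k + 2) / (k + 1)) • x ^ (k + 1)‖ ≤ r ^ (k + 1) / (k + 1) := by
  rw [norm_smul, norm_div, norm_pow, norm_neg, norm_one, one_pow, one_div]
  have hk : ‖((k : 𝕂) + 1)‖ = k + 1 := by exact_mod_cast RCLike.norm_natCast (K := 𝕂) (k + 1)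
  rw [hk, inv_mul_eq_div]
  gcongr
  exact (norm_pow_le' x k.succ_pos).trans (pow_le_pow_left₀ (norm_nonneg x) hx _)

theorem norm_tsum_logSeries_sub_le [CompleteSpace 𝔸] {x : 𝔸} {r : ℝ} (hx : ‖x‖ ≤ r)
    (hr : r < 1) :
    ‖(∑' k : ℕ, ((-1 : 𝕂) ^ (k + 2) / (k + 1)) • x ^ (k + 1)) - x‖ ≤ -Real.log (1 - r) - r := by
  have hr0 : 0 ≤ r := (norm_nonneg x).trans hx
  have hg := Real.hasSum_pow_div_log_of_abs_lt_one (by rwa [abs_of_nonneg hr0])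
  have hf := (Summable.of_norm_bounded hg.summable (norm_logSeries_term_le (𝕂 := 𝕂) hx)).hasSum
  simpa using norm_sub_sum_range_le_of_hasSum hf hg 1 fun n => norm_logSeries_term_le hx _

end NormedAlgebra

theorem stmt_12_general {D d : ℕ}
    (Φ : Matrix (Fin D) (Fin D) ℂ →ₗ[ℂ] Matrix (Fin d) (Fin d) ℂ)
    (hΦ : ∀ X : Matrix (Fin D) (Fin D) ℂ, ‖Φ X‖ ≤ ‖X‖) (hI : Φ 1 = 1)
    (L : Matrix (Fin D) (Fin D) ℂ) (ε : ℝ)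
    (hεln : ε < Real.log 2) (hL : ‖L‖ ≤ ε) :
    ‖matLogOnePlus (Φ (NormedSpace.exp L) - 1) - Φ L‖ ≤
      Real.log (Real.exp (1 - Real.exp ε) / (2 - Real.exp ε)) + Real.exp ε - 1 - ε := by
  set R := NormedSpace.exp L - 1 - L
  set A := Φ (NormedSpace.exp L) - 1
  have hR : ‖R‖ ≤ Real.exp ε - 1 - ε := norm_exp_sub_one_sub_le ℂ hL
  have hA_eq : A = Φ L + Φ R := by
    simp only [A, R, map_sub, hI]
    abel
  have hA : ‖A‖ ≤ Real.exp ε - 1 := by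
    calc ‖A‖ ≤ ‖L‖ + ‖R‖ := hA_eq ▸ (norm_add_le _ _).trans (add_le_add (hΦ L) (hΦ R))
      _ ≤ Real.exp ε - 1 := by linarith
  have hexp : Real.exp ε < 2 := by
    simpa [Real.exp_log] using Real.exp_lt_exp.mpr hεln
  have hlog : ‖matLogOnePlus A - A‖ ≤ -Real.log (1 - (Real.exp ε - 1)) - (Real.exp ε - 1) :=
    norm_tsum_logSeries_sub_le hA (by linarith)
  calc ‖matLogOnePlus A - Φ L‖ = ‖(matLogOnePlus A - A) + Φ R‖ := by
        rw [hA_eq]; congr 1; abel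
    _ ≤ (-Real.log (1 - (Real.exp ε - 1)) - (Real.exp ε - 1)) + (Real.exp ε - 1 - ε) :=
        (norm_add_le _ _).trans (add_le_add hlog ((hΦ R).trans hR))
    _ = _ := by
        rw [Real.log_div (Real.exp_ne_zero _) (by linarith), Real.log_exp]
        ring_nf

/-- If `Φ : M_D(ℂ) → M_d(ℂ)` is a linear contraction with `Φ(I) = I` (e.g. the normalized
partial trace), and `‖L‖ ≤ ε < 1` with `ε < ln 2`, then
`‖log(Φ(exp L)) − Φ(L)‖ ≤ ln(exp(1−e^ε)/(2−e^ε)) + e^ε − 1 − ε`, where `log` is the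
power-series matrix logarithm around the identity. -/
theorem stmt_12 {D d : ℕ}
    (Φ : Matrix (Fin D) (Fin D) ℂ →ₗ[ℂ] Matrix (Fin d) (Fin d) ℂ)
    (hΦ : ∀ X : Matrix (Fin D) (Fin D) ℂ, ‖Φ X‖ ≤ ‖X‖) (hI : Φ 1 = 1)
    (L : Matrix (Fin D) (Fin D) ℂ) (ε : ℝ)
    (hε1 : ε < 1) (hεln : ε < Real.log 2) (hL : ‖L‖ ≤ ε) :
    ‖matLogOnePlus (Φ (NormedSpace.exp L) - 1) - Φ L‖ ≤
      Real.log (Real.exp (1 - Real.exp ε) / (2 - Real.exp ε)) + Real.exp ε - 1 - ε :=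
  stmt_12_general Φ hΦ hI L ε hεln hL
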